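/- Assume m = m_1 = ⋯ = m_ℓ with n_i ≤ m for all i, and set N = n_1 + n_2 + ⋯ + n_ℓ. Let 𝒞 ⊆ ∏_{i=1}^ℓ 𝔽_q^{m×n_i} be a linear code with at least two elements whose dimension is a multiple of m. Then the following are equivalent: (1) 𝒞 is MMCD; (2) every multi-cover X with m(N − |X|) = dim(𝒞) is a complementary information multi-cover of 𝒞. -/

import Mathlib

open Finset

/-- The space `∏_{i=1}^ℓ 𝔽_q^{m_i × n_i}` of `ℓ`-tuples of matrices over `F`. -/
abbrev MCSpace (F : Type*) {ℓ : ℕ} (m n : Fin ℓ → ℕ) : Type _ :=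
  (i : Fin ℓ) → Matrix (Fin (m i)) (Fin (n i)) F

section Defs

variable {F : Type*} [Field F] [Fintype F] {ℓ : ℕ} {m n : Fin ℓ → ℕ}

/-- `(X, Y)` is a multi-cover of the tuple of matrices `C`: every nonzero entry of `C i`
lies in a row indexed by `X i` or a column indexed by `Y i`. -/
def IsMultiCover (X : (i : Fin ℓ) → Finset (Fin (m i))) (Y : (i : Fin ℓ) → Finset (Fin (n i)))
    (C : MCSpace F m n) : Prop :=
  ∀ i a b, C i a b ≠ 0 → a ∈ X i ∨ b ∈ Y i

/-- The size `Σ_i (|X_i| + |Y_i|)` of a multi-cover. -/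
def mcSize {ℓ : ℕ} {m n : Fin ℓ → ℕ} (X : (i : Fin ℓ) → Finset (Fin (m i)))
    (Y : (i : Fin ℓ) → Finset (Fin (n i))) : ℕ :=
  ∑ i, ((X i).card + (Y i).card)

/-- The multi-cover weight: the minimum size of a multi-cover of `C`. -/
noncomputable def wtMC (C : MCSpace F m n) : ℕ :=
  sInf {r | ∃ X Y, IsMultiCover X Y C ∧ mcSize X Y = r}

/-- The minimum multi-cover distance of a code. -/
noncomputable def dMC (𝒞 : Set (MCSpace F m n)) : ℕ :=
  sInf {r | ∃ C ∈ 𝒞, ∃ D ∈ 𝒞, C ≠ D ∧ wtMC (C - D) = r}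

/-- The column Hamming weight: the number of nonzero columns among the matrices `C i`. -/
noncomputable def wtHC (C : MCSpace F m n) : ℕ :=
  ∑ i, Set.ncard {b : Fin (n i) | ∃ a, C i a b ≠ 0}

/-- The minimum column Hamming distance of a code. -/
noncomputable def dHC (𝒞 : Set (MCSpace F m n)) : ℕ :=
  sInf {r | ∃ C ∈ 𝒞, ∃ D ∈ 𝒞, C ≠ D ∧ wtHC (C - D) = r}

/-- The projection `π_X` removing, in each block `i`, the rows indexed by `X i` and the
columns indexed by `Y i` (the remaining rows and columns are re-indexed in order). -/
noncomputable def projMC (X : (i : Fin ℓ) → Finset (Fin (m i)))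
    (Y : (i : Fin ℓ) → Finset (Fin (n i))) (C : MCSpace F m n) :
    MCSpace F (fun i => m i - (X i).card) (fun i => n i - (Y i).card) :=
  fun i a b =>
    C i ((X i)ᶜ.orderIsoOfFin (by simp [Finset.card_compl]) a)
        ((Y i)ᶜ.orderIsoOfFin (by simp [Finset.card_compl]) b)

/-- The projection `π_X` as a linear map. -/
noncomputable def projMCLin (X : (i : Fin ℓ) → Finset (Fin (m i)))
    (Y : (i : Fin ℓ) → Finset (Fin (n i))) :
    MCSpace F m n →ₗ[F] MCSpace F (fun i => m i - (X i).card) (fun i => n i - (Y i).card) where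
  toFun := projMC X Y
  map_add' _ _ := rfl
  map_smul' _ _ := rfl

/-- The punctured code `𝒞_X = π_X(𝒞)`. -/
noncomputable def punctureMC (𝒞 : Submodule F (MCSpace F m n))
    (X : (i : Fin ℓ) → Finset (Fin (m i))) (Y : (i : Fin ℓ) → Finset (Fin (n i))) :
    Submodule F (MCSpace F (fun i => m i - (X i).card) (fun i => n i - (Y i).card)) :=
  Submodule.map (projMCLin X Y) 𝒞

/-- The subspace of tuples vanishing on all entries covered by `(X, Y)`. -/
def zeroOnMC (X : (i : Fin ℓ) → Finset (Fin (m i))) (Y : (i : Fin ℓ) → Finset (Fin (n i))) :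
    Submodule F (MCSpace F m n) where
  carrier := {C | ∀ i a b, (a ∈ X i ∨ b ∈ Y i) → C i a b = 0}
  zero_mem' := by intro i a b _; rfl
  add_mem' := by
    intro C D hC hD i a b hab
    show C i a b + D i a b = 0
    rw [hC i a b hab, hD i a b hab, add_zero]
  smul_mem' := by
    intro c C hC i a b hab
    show c * C i a b = 0
    rw [hC i a b hab, mul_zero]

/-- The shortened code `𝒞^X`. -/
noncomputable def shortenMC (𝒞 : Submodule F (MCSpace F m n))
    (X : (i : Fin ℓ) → Finset (Fin (m i))) (Y : (i : Fin ℓ) → Finset (Fin (n i))) :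
    Submodule F (MCSpace F (fun i => m i - (X i).card) (fun i => n i - (Y i).card)) :=
  Submodule.map (projMCLin X Y) (𝒞 ⊓ zeroOnMC X Y)

/-- The standard (trace / entrywise) inner product on `MCSpace F m n`. -/
def innerMC (C D : MCSpace F m n) : F := ∑ i, ∑ a, ∑ b, C i a b * D i a b

/-- The dual code with respect to the entrywise inner product. -/
def dualMC (𝒞 : Submodule F (MCSpace F m n)) : Submodule F (MCSpace F m n) where
  carrier := {D | ∀ C ∈ 𝒞, innerMC C D = 0}
  zero_mem' := by intro C _; simp [innerMC]
  add_mem' := by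
    intro D E hD hE C hC
    have h1 := hD C hC
    have h2 := hE C hC
    simp only [innerMC] at h1 h2 ⊢
    simp only [Pi.add_apply, Matrix.add_apply, mul_add, Finset.sum_add_distrib, h1, h2, add_zero]
  smul_mem' := by
    intro c D hD C hC
    have h1 := hD C hC
    simp only [innerMC] at h1 ⊢
    simp only [Pi.smul_apply, Matrix.smul_apply, smul_eq_mul, mul_left_comm, ← Finset.mul_sum,
      h1, mul_zero]

/-- `𝒞` is a maximum multi-cover distance (MMCD) code: it attains the Singleton bound,
where `j` and `δ` are the (unique) integers with `d_MC(𝒞) - 1 = Σ_{i<j} n_i + δ`,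
`0 ≤ δ ≤ n_j - 1`. -/
noncomputable def IsMMCD (𝒞 : Set (MCSpace F m n)) : Prop :=
  ∃ (j : Fin ℓ) (δ : ℕ), δ ≤ n j - 1 ∧
    dMC 𝒞 - 1 = (∑ i ∈ Finset.Iio j, n i) + δ ∧
    𝒞.ncard = (Fintype.card F) ^ ((∑ i ∈ Finset.Ici j, m i * n i) - m j * δ)

/-- The sum-rank weight. -/
noncomputable def wtSR (C : MCSpace F m n) : ℕ := ∑ i, (C i).rank

/-- The minimum sum-rank distance of a code. -/
noncomputable def dSR (𝒞 : Set (MCSpace F m n)) : ℕ :=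
  sInf {r | ∃ C ∈ 𝒞, ∃ D ∈ 𝒞, C ≠ D ∧ wtSR (C - D) = r}

/-- The cover weight of a single matrix. -/
noncomputable def coverWt {m n : ℕ} (C : Matrix (Fin m) (Fin n) F) : ℕ :=
  sInf {r | ∃ (X : Finset (Fin m)) (Y : Finset (Fin n)),
    (∀ a b, C a b ≠ 0 → a ∈ X ∨ b ∈ Y) ∧ X.card + Y.card = r}

end Defs

/-- `S_r^{m,n}`: the number of `m × n` matrices over `F` of cover weight exactly `r`. -/
noncomputable def Scount (F : Type*) [Field F] [Fintype F] (m n r : ℕ) : ℕ :=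
  Set.ncard {C : Matrix (Fin m) (Fin n) F | coverWt C = r}

section Helpers

variable {F : Type*} [Field F] [Fintype F] {ℓ : ℕ} {m n : Fin ℓ → ℕ}

lemma projMC_eq_zero_iff (X : (i : Fin ℓ) → Finset (Fin (m i)))
    (Y : (i : Fin ℓ) → Finset (Fin (n i))) (C : MCSpace F m n) :
    projMC X Y C = 0 ↔ IsMultiCover X Y C := by
  constructor
  · intro h i a b hC
    by_contra hab
    push_neg at hab
    obtain ⟨ha, hb⟩ := hab
    have ha' : a ∈ (X i)ᶜ := Finset.mem_compl.2 ha
    have hb' : b ∈ (Y i)ᶜ := Finset.mem_compl.2 hb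
    have hXc : ((X i)ᶜ).card = m i - (X i).card := by simp [Finset.card_compl]
    have hYc : ((Y i)ᶜ).card = n i - (Y i).card := by simp [Finset.card_compl]
    set a' := ((X i)ᶜ.orderIsoOfFin hXc).symm ⟨a, ha'⟩ with ha'def
    set b' := ((Y i)ᶜ.orderIsoOfFin hYc).symm ⟨b, hb'⟩ with hb'def
    have h1 : projMC X Y C i a' b' = C i a b := by
      simp only [projMC, ha'def, hb'def, OrderIso.apply_symm_apply]
    apply hC
    rw [← h1, h]
    rfl
  · intro h
    funext i a b
    show C i _ _ = 0
    by_contra hC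
    rcases h i _ _ hC with h1 | h1
    · exact Finset.mem_compl.1 ((X i)ᶜ.orderIsoOfFin (by simp [Finset.card_compl]) a).2 h1
    · exact Finset.mem_compl.1 ((Y i)ᶜ.orderIsoOfFin (by simp [Finset.card_compl]) b).2 h1

lemma isMultiCover_mono {X X' : (i : Fin ℓ) → Finset (Fin (m i))}
    {Y Y' : (i : Fin ℓ) → Finset (Fin (n i))} {C : MCSpace F m n}
    (h : IsMultiCover X Y C) (hX : ∀ i, X i ⊆ X' i) (hY : ∀ i, Y i ⊆ Y' i) :
    IsMultiCover X' Y' C := fun i a b hab =>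
  (h i a b hab).imp (fun h' => hX i h') (fun h' => hY i h')

lemma wtMC_le_of_cover {X : (i : Fin ℓ) → Finset (Fin (m i))}
    {Y : (i : Fin ℓ) → Finset (Fin (n i))} {C : MCSpace F m n}
    (h : IsMultiCover X Y C) : wtMC C ≤ mcSize X Y :=
  Nat.sInf_le ⟨X, Y, h, rfl⟩

lemma wtMC_set_nonempty (C : MCSpace F m n) :
    {r | ∃ X Y, IsMultiCover X Y C ∧ mcSize X Y = r}.Nonempty :=
  ⟨_, fun _ => Finset.univ, fun _ => ∅, fun _ a _ _ => Or.inl (Finset.mem_univ a), rfl⟩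

lemma wtMC_le_sum (C : MCSpace F m n) : wtMC C ≤ ∑ i, n i := by
  have h := wtMC_le_of_cover (C := C) (X := fun _ => ∅) (Y := fun _ => Finset.univ)
    (fun _ _ b _ => Or.inr (Finset.mem_univ b))
  simpa [mcSize] using h

lemma wtMC_pos {C : MCSpace F m n} (h : C ≠ 0) : 1 ≤ wtMC C := by
  rw [Nat.one_le_iff_ne_zero]
  intro h0
  have hmem : (0 : ℕ) ∈ {r | ∃ X Y, IsMultiCover X Y C ∧ mcSize X Y = r} := by
    rw [← h0]; exact Nat.sInf_mem (wtMC_set_nonempty C)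
  obtain ⟨X, Y, hcov, hsz⟩ := hmem
  apply h
  funext i a b
  show C i a b = 0
  by_contra hC
  have hX : (X i).card = 0 ∧ (Y i).card = 0 := by
    have := Finset.sum_eq_zero_iff.1 hsz i (Finset.mem_univ i)
    omega
  rcases hcov i a b hC with h1 | h1
  · exact absurd (Finset.card_eq_zero.1 hX.1 ▸ h1) (Finset.notMem_empty a)
  · exact absurd (Finset.card_eq_zero.1 hX.2 ▸ h1) (Finset.notMem_empty b)

/-- Any family of finsets can be enlarged coordinatewise to achieve any total
cardinality up to `∑ i, n i`. -/
lemma exists_superset_sum_card (e : ℕ) (Y : (i : Fin ℓ) → Finset (Fin (n i)))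
    (h : (∑ i, (Y i).card) + e ≤ ∑ i, n i) :
    ∃ Y' : (i : Fin ℓ) → Finset (Fin (n i)), (∀ i, Y i ⊆ Y' i) ∧
      ∑ i, (Y' i).card = (∑ i, (Y i).card) + e := by
  classical
  induction e generalizing Y with
  | zero => exact ⟨Y, fun i => subset_rfl, by simp⟩
  | succ e ih =>
    have hlt : ∑ i, (Y i).card < ∑ i, n i := by omega
    have hex : ∃ i, (Y i).card < n i := by
      by_contra hc
      push_neg at hc
      have : ∑ i, n i ≤ ∑ i, (Y i).card := Finset.sum_le_sum fun i _ => hc i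
      omega
    obtain ⟨i, hi⟩ := hex
    obtain ⟨x, hx⟩ : ∃ x, x ∉ Y i := by
      by_contra hc
      push_neg at hc
      have : Y i = Finset.univ := Finset.eq_univ_iff_forall.2 hc
      rw [this] at hi
      simp at hi
    set Y1 : (i : Fin ℓ) → Finset (Fin (n i)) := Function.update Y i (insert x (Y i)) with hY1
    have hsum : ∑ j, (Y1 j).card = (∑ j, (Y j).card) + 1 := by
      have h1 : ∑ j, (Y1 j).card
          = (insert x (Y i)).card + ∑ j ∈ Finset.univ.erase i, (Y j).card := by
        rw [← Finset.add_sum_erase _ _ (Finset.mem_univ i)]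
        congr 1
        · simp [hY1]
        · apply Finset.sum_congr rfl
          intro j hj
          have : j ≠ i := (Finset.mem_erase.1 hj).1
          simp [hY1, Function.update_of_ne this]
      rw [h1, Finset.card_insert_of_notMem hx,
        ← Finset.add_sum_erase _ _ (Finset.mem_univ i)]
      ring
    obtain ⟨Y', hsub, hcard⟩ := ih Y1 (by omega)
    refine ⟨Y', fun j => ?_, by omega⟩
    refine subset_trans ?_ (hsub j)
    by_cases hj : j = i
    · subst hj
      simp only [hY1, Function.update_self]
      exact Finset.subset_insert _ _
    · simp [hY1, Function.update_of_ne hj]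

lemma mcSize_eq (X : (i : Fin ℓ) → Finset (Fin (m i))) (Y : (i : Fin ℓ) → Finset (Fin (n i))) :
    mcSize X Y = (∑ i, (X i).card) + ∑ i, (Y i).card := by
  simp [mcSize, Finset.sum_add_distrib]

lemma finrank_MCSpace (m n : Fin ℓ → ℕ) :
    Module.finrank F (MCSpace F m n) = ∑ i, m i * n i := by
  rw [Module.finrank_pi_fintype]
  simp [Module.finrank_matrix]

end Helpers

/-- characterization of linear MMCD codes (with equal numbers of rows and
dimension a multiple of `m`) via complementary information multi-covers. -/
theorem MMCD_iff_compInfoCovers {F : Type*} [Field F] [Fintype F] {ℓ : ℕ} (m : ℕ)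
    {n : Fin ℓ → ℕ} (hm : 0 < m) (hn : ∀ i, 0 < n i) (hnm : ∀ i, n i ≤ m)
    (𝒞 : Submodule F (MCSpace F (fun _ : Fin ℓ => m) n))
    (h𝒞 : 1 < (𝒞 : Set (MCSpace F (fun _ : Fin ℓ => m) n)).ncard)
    (hdvd : m ∣ Module.finrank F 𝒞) :
    ((𝒞 : Set (MCSpace F (fun _ : Fin ℓ => m) n)).ncard
        = (Fintype.card F) ^ (m * ((∑ i, n i)
            - dMC (𝒞 : Set (MCSpace F (fun _ : Fin ℓ => m) n)) + 1)))
      ↔ ∀ (X : (i : Fin ℓ) → Finset (Fin m)) (Y : (i : Fin ℓ) → Finset (Fin (n i))),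
          m * ((∑ i, n i) - mcSize X Y) = Module.finrank F 𝒞 →
          Set.InjOn (projMC X Y) (𝒞 : Set (MCSpace F (fun _ : Fin ℓ => m) n)) := by
  classical
  set N := ∑ i, n i with hN
  set d := dMC (𝒞 : Set (MCSpace F (fun _ : Fin ℓ => m) n)) with hd
  obtain ⟨k, hk⟩ := hdvd
  have hq : 1 < Fintype.card F := Fintype.one_lt_card
  -- cardinality of the code
  letI : Fintype ↥𝒞 := Fintype.ofFinite _
  have hcard : (𝒞 : Set (MCSpace F (fun _ : Fin ℓ => m) n)).ncard
      = Fintype.card F ^ (m * k) := by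
    rw [← Nat.card_coe_set_eq, Nat.card_eq_fintype_card, ← hk]
    exact Module.card_eq_pow_finrank
  -- the distance set is nonempty and `d` is a member
  obtain ⟨C0, hC0, D0, hD0, hne0⟩ := (Set.one_lt_ncard (Set.toFinite _)).1 h𝒞
  have hdne : {r | ∃ C ∈ (𝒞 : Set (MCSpace F (fun _ : Fin ℓ => m) n)),
      ∃ D ∈ (𝒞 : Set (MCSpace F (fun _ : Fin ℓ => m) n)), C ≠ D ∧ wtMC (C - D) = r}.Nonempty :=
    ⟨wtMC (C0 - D0), C0, hC0, D0, hD0, hne0, rfl⟩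
  have hdmem := Nat.sInf_mem hdne
  obtain ⟨C1, hC1, D1, hD1, hne1, hw1⟩ := hdmem
  set E1 := C1 - D1 with hE1
  have hE1mem : E1 ∈ 𝒞 := Submodule.sub_mem _ hC1 hD1
  have hE1ne : E1 ≠ 0 := sub_ne_zero.2 hne1
  have hw1d : wtMC E1 = d := hw1
  have hd1 : 1 ≤ d := hw1d ▸ wtMC_pos hE1ne
  have hdN : d ≤ N := hw1d ▸ wtMC_le_sum E1
  -- minimum distance lower-bounds weights of nonzero codewords
  have hdle : ∀ E ∈ 𝒞, E ≠ 0 → d ≤ wtMC E := by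
    intro E hE h0
    exact Nat.sInf_le ⟨E, hE, 0, Submodule.zero_mem _, h0, by rw [sub_zero]⟩
  -- k ≥ 1
  have hk1 : 1 ≤ k := by
    rcases Nat.eq_zero_or_pos k with h0 | h1
    · rw [h0, Nat.mul_zero, pow_zero] at hcard; omega
    · exact h1
  -- k ≤ N
  have hkN : k ≤ N := by
    have h1 : Module.finrank F 𝒞
        ≤ Module.finrank F (MCSpace F (fun _ : Fin ℓ => m) n) := Submodule.finrank_le 𝒞
    rw [finrank_MCSpace, ← Finset.mul_sum] at h1
    rw [hk] at h1
    exact Nat.le_of_mul_le_mul_left h1 hm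
  -- projections of differences
  have hprojsub : ∀ (X : (i : Fin ℓ) → Finset (Fin m)) (Y : (i : Fin ℓ) → Finset (Fin (n i)))
      (C D : MCSpace F (fun _ : Fin ℓ => m) n),
      projMC X Y C = projMC X Y D → projMC X Y (C - D) = 0 := by
    intro X Y C D h
    have : (projMCLin (F := F) X Y) (C - D) = 0 := by
      rw [map_sub]
      show projMC X Y C - projMC X Y D = 0
      rw [h, sub_self]
    exact this
  constructor
  · -- MMCD → complementary information multi-covers
    intro hM X Y hXY
    have hexp : m * k = m * (N - d + 1) :=
      Nat.pow_right_injective hq ((hcard.symm.trans hM))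
    have hk' : k = N - d + 1 := Nat.eq_of_mul_eq_mul_left hm hexp
    rw [hk] at hXY
    have hs : N - mcSize X Y = k := Nat.eq_of_mul_eq_mul_left hm hXY
    have hsize : mcSize X Y = d - 1 := by omega
    intro C hC D hD hproj
    by_contra hne
    have hE : C - D ∈ 𝒞 := Submodule.sub_mem _ hC hD
    have hEne : C - D ≠ 0 := sub_ne_zero.2 hne
    have hcov := (projMC_eq_zero_iff X Y (C - D)).1 (hprojsub X Y C D hproj)
    have h1 := wtMC_le_of_cover hcov
    have h2 := hdle _ hE hEne
    omega
  · -- complementary information multi-covers → MMCD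
    intro hInj
    -- Singleton bound : k + (d - 1) ≤ N
    have hSingleton : k + (d - 1) ≤ N := by
      obtain ⟨Y0, -, hY0card⟩ := exists_superset_sum_card (d - 1)
        (fun i => (∅ : Finset (Fin (n i)))) (by simp; omega)
      simp only [Finset.card_empty, Finset.sum_const_zero, Nat.zero_add] at hY0card
      set X0 : (i : Fin ℓ) → Finset (Fin m) := fun _ => ∅ with hX0
      have hker : ∀ E ∈ 𝒞, projMC X0 Y0 E = 0 → E = 0 := by
        intro E hE h0
        by_contra hEne
        have hcov := (projMC_eq_zero_iff X0 Y0 E).1 h0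
        have h1 := wtMC_le_of_cover hcov
        have h2 := hdle E hE hEne
        have h3 : mcSize X0 Y0 = d - 1 := by
          rw [mcSize_eq]
          simp [hX0, hY0card]
        omega
      have hinj : Function.Injective ((projMCLin (F := F) X0 Y0).comp 𝒞.subtype) := by
        intro ⟨a, ha⟩ ⟨b, hb⟩ hab
        have : projMC X0 Y0 a = projMC X0 Y0 b := hab
        have h0 : a - b = 0 := hker (a - b) (Submodule.sub_mem _ ha hb)
          (hprojsub X0 Y0 a b this)
        exact Subtype.ext (sub_eq_zero.1 h0)
      have hle := LinearMap.finrank_le_finrank_of_injective hinj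
      rw [finrank_MCSpace, hk] at hle
      have hYle : ∀ i, (Y0 i).card ≤ n i := by
        intro i
        simpa using Finset.card_le_univ (Y0 i)
      have hsum : ∑ i, (m - (X0 i).card) * (n i - (Y0 i).card) = m * (N - (d - 1)) := by
        have : ∀ i ∈ Finset.univ, (m - (X0 i).card) * (n i - (Y0 i).card)
            = m * (n i - (Y0 i).card) := by
          intro i _
          simp [hX0]
        rw [Finset.sum_congr rfl this, ← Finset.mul_sum,
          Finset.sum_tsub_distrib _ (fun i _ => hYle i), hY0card]
      rw [hsum] at hle
      have := Nat.le_of_mul_le_mul_left hle hm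
      omega
    -- lower bound on the distance : N - k + 1 ≤ d
    have hge : N - k + 1 ≤ d := by
      by_contra hc
      push_neg at hc
      have hdle' : d ≤ N - k := by omega
      -- a minimum cover of E1 of size d
      obtain ⟨X1, Y1, hcov1, hsz1⟩ := Nat.sInf_mem (wtMC_set_nonempty E1)
      replace hsz1 : mcSize X1 Y1 = d := hsz1.trans hw1d
      have hY1le : ∑ i, (Y1 i).card ≤ d := by
        rw [← hsz1, mcSize_eq]; omega
      obtain ⟨Y', hsub, hcard'⟩ := exists_superset_sum_card ((N - k) - d) Y1 (by omega)
      have hcov' : IsMultiCover X1 Y' E1 :=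
        isMultiCover_mono hcov1 (fun i => subset_rfl) hsub
      have hsz' : mcSize X1 Y' = N - k := by
        rw [mcSize_eq, hcard']
        rw [mcSize_eq] at hsz1
        omega
      have happ := hInj X1 Y' (by rw [hsz', hk]; congr 1; omega)
      have hproj0 : projMC X1 Y' E1 = projMC X1 Y' 0 := by
        rw [(projMC_eq_zero_iff X1 Y' E1).2 hcov']
        rfl
      exact hE1ne (happ hE1mem (Submodule.zero_mem _) hproj0)
    have hdval : d = N - k + 1 := by omega
    rw [hcard]
    congr 1
    have : N - d + 1 = k := by omega
    rw [this]
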